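/- arXiv:1202.5474 — 4 statements merged into one kernel-verified Lean document; each statement's English description precedes it below -/
import Mathlib

section
/- Let m, n be positive integers, σ > 0 a real number, H₁, H₂ ∈ ℂ^{m×n}, and w₁, w₂ ∈ ℂ^n with H₁w₁ ≠ 0 and H₂w₂ ≠ 0. Define cos²θ = |(H₁w₁)^H(H₂w₂)|² / (‖H₁w₁‖² ‖H₂w₂‖²) and sin²θ = 1 − cos²θ. Then w₁^H H₁^H (σ²I_m + (H₂w₂)(H₂w₂)^H)^{-1} H₁ w₁ = sin²θ · ‖H₁w₁‖²/σ² + cos²θ · ‖H₁w₁‖²/(σ² + ‖H₂w₂‖²). -/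
/-!
By the Sherman–Morrison formula, `(σ²I + vvᴴ)⁻¹ = σ⁻²(I - vvᴴ / (σ² + ‖v‖²))`, so with
`u = H₁w₁`, `v = H₂w₂` the SINR equals `(‖u‖² - |uᴴv|² / (σ² + ‖v‖²)) / σ²`.
Since `|uᴴv|² = cos²θ ‖u‖²‖v‖²`, splitting `‖u‖² = sin²θ ‖u‖² + cos²θ ‖u‖²` gives the formula.
-/

open Matrix

section ShermanMorrison

variable {K : Type*} [Field K] {m : Type*} [Fintype m] [DecidableEq m]

theorem inv_smul_one_add_vecMulVec {t : K} {u v : m → K} (ht : t ≠ 0)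
    (htuv : t + v ⬝ᵥ u ≠ 0) :
    (t • 1 + vecMulVec u v)⁻¹ = t⁻¹ • (1 - (t + v ⬝ᵥ u)⁻¹ • vecMulVec u v) := by
  refine inv_eq_right_inv ?_
  simp only [Matrix.mul_smul, add_mul, Matrix.mul_sub, Matrix.smul_mul, Matrix.one_mul,
    Matrix.mul_one, vecMulVec_mul_vecMulVec, vecMulVec_smul]
  match_scalars
  · field_simp
  · field_simp
    ring

theorem dotProduct_inv_smul_one_add_vecMulVec_mulVec {t : K} {u v : m → K} (ht : t ≠ 0)
    (htuv : t + v ⬝ᵥ u ≠ 0) (x y : m → K) :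
    x ⬝ᵥ ((t • 1 + vecMulVec u v)⁻¹ *ᵥ y)
      = t⁻¹ * (x ⬝ᵥ y - (x ⬝ᵥ u) * (v ⬝ᵥ y) / (t + v ⬝ᵥ u)) := by
  rw [inv_smul_one_add_vecMulVec ht htuv, smul_mulVec, sub_mulVec, one_mulVec, smul_mulVec,
    vecMulVec_mulVec, dotProduct_smul, dotProduct_sub, dotProduct_smul, dotProduct_smul,
    MulOpposite.smul_eq_mul_unop, MulOpposite.unop_op]
  simp only [smul_eq_mul]
  ring

end ShermanMorrison

section Complex

open scoped ComplexOrder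

variable {m : Type*} [Fintype m]

theorem ofReal_re_star_dotProduct_self (v : m → ℂ) :
    (((star v ⬝ᵥ v).re : ℝ) : ℂ) = star v ⬝ᵥ v :=
  Complex.conj_eq_iff_re.mp (star_dotProduct v v).symm

theorem re_star_dotProduct_self_pos {v : m → ℂ} (hv : v ≠ 0) : 0 < (star v ⬝ᵥ v).re :=
  (Complex.pos_iff.mp (dotProduct_star_self_pos_iff.mpr hv)).1

theorem star_dotProduct_mul_star_dotProduct (u v : m → ℂ) :
    (star u ⬝ᵥ v) * (star v ⬝ᵥ u) = ((‖star u ⬝ᵥ v‖ ^ 2 : ℝ) : ℂ) := by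
  rw [star_dotProduct v u, Complex.star_def, Complex.mul_conj, Complex.normSq_eq_norm_sq]

variable [DecidableEq m]

theorem star_dotProduct_inv_sq_smul_one_add_vecMulVec_mulVec {σ : ℝ} (hσ : σ ≠ 0)
    {u v : m → ℂ} (hu : u ≠ 0) (hv : v ≠ 0) :
    star u ⬝ᵥ (((σ : ℂ) ^ 2 • 1 + vecMulVec v (star v))⁻¹ *ᵥ u)
      = (((1 - ‖star u ⬝ᵥ v‖ ^ 2 / ((star u ⬝ᵥ u).re * (star v ⬝ᵥ v).re))
            * (star u ⬝ᵥ u).re / σ ^ 2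
          + ‖star u ⬝ᵥ v‖ ^ 2 / ((star u ⬝ᵥ u).re * (star v ⬝ᵥ v).re)
            * (star u ⬝ᵥ u).re / (σ ^ 2 + (star v ⬝ᵥ v).re) : ℝ) : ℂ) := by
  have hu₀ := re_star_dotProduct_self_pos hu
  have hv₀ := re_star_dotProduct_self_pos hv
  have hσv : (σ : ℂ) ^ 2 + ((star v ⬝ᵥ v).re : ℂ) ≠ 0 := by
    exact_mod_cast (by positivity : σ ^ 2 + (star v ⬝ᵥ v).re ≠ 0)
  rw [dotProduct_inv_smul_one_add_vecMulVec_mulVec (by exact_mod_cast pow_ne_zero 2 hσ)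
      (ofReal_re_star_dotProduct_self v ▸ hσv),
    star_dotProduct_mul_star_dotProduct, ← ofReal_re_star_dotProduct_self u,
    ← ofReal_re_star_dotProduct_self v]
  generalize (star u ⬝ᵥ u).re = b at *
  generalize (star v ⬝ᵥ v).re = a at *
  push_cast
  field_simp
  ring

end Complex

theorem stmt1_general (m n : ℕ) (σ : ℝ) (hσ : 0 < σ)
    (H₁ H₂ : Matrix (Fin m) (Fin n) ℂ) (w₁ w₂ : Fin n → ℂ)
    (h1 : H₁ *ᵥ w₁ ≠ 0) (h2 : H₂ *ᵥ w₂ ≠ 0)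
    (c s : ℝ)
    (hc : c = ‖star (H₁ *ᵥ w₁) ⬝ᵥ (H₂ *ᵥ w₂)‖ ^ 2
        / ((star (H₁ *ᵥ w₁) ⬝ᵥ (H₁ *ᵥ w₁)).re * (star (H₂ *ᵥ w₂) ⬝ᵥ (H₂ *ᵥ w₂)).re))
    (hs : s = 1 - c) :
    star w₁ ⬝ᵥ (H₁ᴴ *ᵥ
        ((((σ : ℂ) ^ 2 • (1 : Matrix (Fin m) (Fin m) ℂ)
            + vecMulVec (H₂ *ᵥ w₂) (star (H₂ *ᵥ w₂)))⁻¹) *ᵥ (H₁ *ᵥ w₁)))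
      = ((s * (star (H₁ *ᵥ w₁) ⬝ᵥ (H₁ *ᵥ w₁)).re / σ ^ 2
          + c * (star (H₁ *ᵥ w₁) ⬝ᵥ (H₁ *ᵥ w₁)).re
              / (σ ^ 2 + (star (H₂ *ᵥ w₂) ⬝ᵥ (H₂ *ᵥ w₂)).re) : ℝ) : ℂ) := by
  rw [dotProduct_mulVec, ← star_mulVec, hs, hc]
  exact star_dotProduct_inv_sq_smul_one_add_vecMulVec_mulVec hσ.ne' h1 h2

/-- Proposition 1: with `cos²θ = |(H₁w₁)ᴴ(H₂w₂)|²/(‖H₁w₁‖²‖H₂w₂‖²)`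
and `sin²θ = 1 − cos²θ`, the MMSE SINR equals
`sin²θ·‖H₁w₁‖²/σ² + cos²θ·‖H₁w₁‖²/(σ² + ‖H₂w₂‖²)`. -/
theorem stmt1 (m n : ℕ) (hm : 0 < m) (hn : 0 < n) (σ : ℝ) (hσ : 0 < σ)
    (H₁ H₂ : Matrix (Fin m) (Fin n) ℂ) (w₁ w₂ : Fin n → ℂ)
    (h1 : H₁ *ᵥ w₁ ≠ 0) (h2 : H₂ *ᵥ w₂ ≠ 0)
    (c s : ℝ)
    (hc : c = ‖star (H₁ *ᵥ w₁) ⬝ᵥ (H₂ *ᵥ w₂)‖ ^ 2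
        / ((star (H₁ *ᵥ w₁) ⬝ᵥ (H₁ *ᵥ w₁)).re * (star (H₂ *ᵥ w₂) ⬝ᵥ (H₂ *ᵥ w₂)).re))
    (hs : s = 1 - c) :
    star w₁ ⬝ᵥ (H₁ᴴ *ᵥ
        ((((σ : ℂ) ^ 2 • (1 : Matrix (Fin m) (Fin m) ℂ)
            + vecMulVec (H₂ *ᵥ w₂) (star (H₂ *ᵥ w₂)))⁻¹) *ᵥ (H₁ *ᵥ w₁)))
      = ((s * (star (H₁ *ᵥ w₁) ⬝ᵥ (H₁ *ᵥ w₁)).re / σ ^ 2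
          + c * (star (H₁ *ᵥ w₁) ⬝ᵥ (H₁ *ᵥ w₁)).re
              / (σ ^ 2 + (star (H₂ *ᵥ w₂) ⬝ᵥ (H₂ *ᵥ w₂)).re) : ℝ) : ℂ) :=
  stmt1_general m n σ hσ H₁ H₂ w₁ w₂ h1 h2 c s hc hs
end

section
/- Let m be a positive integer, σ > 0 and t > 0 real numbers, and v₁, v₂ ∈ ℂ^m with v₂ ≠ 0 and c := v₁^H v₂ ≠ 0. Let e^{jφ₁} = c/|c| and set v_δ = t·e^{−jφ₁}·v₂/‖v₂‖. Then |(v₁ + v_δ)^H v₂|² / (σ² + ‖v₁ + v_δ‖²) > |v₁^H v₂|² / (σ² + ‖v₁‖²). -/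
/-!
Write `c = ⟪x, y⟫` and `u = c / ‖c‖`. The step `δ = (t ū / ‖y‖) • y` is chosen so that
`⟪x + δ, y⟫ = (‖c‖ + t ‖y‖) u` and `‖x + δ‖² = ‖x‖² + 2 t ‖c‖ / ‖y‖ + t²`. After cross-multiplying,
the gain in the ratio is `(2 t ‖c‖ / ‖y‖ + t²) ((σ² + ‖x‖²) ‖y‖² - ‖c‖²)`, which is positive by
Cauchy–Schwarz because `σ > 0`.
-/

open RCLike
open scoped InnerProductSpace ComplexConjugate

theorem sq_div_lt_sq_add_mul_div {C D N t : ℝ} (hC : 0 ≤ C) (hN : 0 < N) (ht : 0 < t)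
    (hD : C ^ 2 < D * N ^ 2) :
    C ^ 2 / D < (C + t * N) ^ 2 / (D + (2 * t * C / N + t ^ 2)) := by
  have hD₀ : 0 < D := pos_of_mul_pos_left ((sq_nonneg C).trans_lt hD) (sq_nonneg N)
  have hgap : 0 < (2 * t * C / N + t ^ 2) * (D * N ^ 2 - C ^ 2) := by
    have := sub_pos.2 hD
    positivity
  have key : (C + t * N) ^ 2 * D - C ^ 2 * (D + (2 * t * C / N + t ^ 2))
      = (2 * t * C / N + t ^ 2) * (D * N ^ 2 - C ^ 2) := by
    field_simp
    ring
  rw [div_lt_div_iff₀ hD₀ (by positivity)]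
  linarith

section PhaseAligned

variable (𝕜 : Type*) {E : Type*} [RCLike 𝕜] [NormedAddCommGroup E] [InnerProductSpace 𝕜 E]

def phaseAlignedStep (x y : E) (t : ℝ) : E :=
  ((t : 𝕜) * conj (⟪x, y⟫_𝕜 / ‖⟪x, y⟫_𝕜‖) / ‖y‖) • y

variable {𝕜}

theorem conj_div_norm_mul_self (c : 𝕜) : conj (c / ‖c‖) * c = ‖c‖ := by
  rcases eq_or_ne c 0 with rfl | hc
  · simp
  · rw [map_div₀, conj_ofReal, div_mul_eq_mul_div, RCLike.conj_mul]
    have : (‖c‖ : 𝕜) ≠ 0 := by simpa using hc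
    field_simp

theorem norm_div_norm_self {c : 𝕜} (hc : c ≠ 0) : ‖c / ‖c‖‖ = 1 := by
  rw [norm_div, norm_ofReal, abs_norm, div_self (norm_ne_zero_iff.2 hc)]

variable {x y : E} {t : ℝ}

theorem inner_phaseAlignedStep_right :
    ⟪x, phaseAlignedStep 𝕜 x y t⟫_𝕜 = (t * ‖⟪x, y⟫_𝕜‖ / ‖y‖ : ℝ) := by
  rw [phaseAlignedStep, inner_smul_right, mul_div_right_comm, mul_assoc,
    conj_div_norm_mul_self]
  push_cast
  ring

theorem inner_phaseAlignedStep_left (hy : y ≠ 0) :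
    ⟪phaseAlignedStep 𝕜 x y t, y⟫_𝕜 = (t * ‖y‖ : ℝ) * (⟪x, y⟫_𝕜 / ‖⟪x, y⟫_𝕜‖) := by
  have : (‖y‖ : 𝕜) ≠ 0 := by simpa using hy
  rw [phaseAlignedStep, inner_smul_left, inner_self_eq_norm_sq_to_K]
  simp only [map_div₀, map_mul, conj_ofReal, conj_conj]
  field_simp

theorem norm_phaseAlignedStep (hy : y ≠ 0) (hc : ⟪x, y⟫_𝕜 ≠ 0) (ht : 0 ≤ t) :
    ‖phaseAlignedStep 𝕜 x y t‖ = t := by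
  rw [phaseAlignedStep, norm_smul, norm_div, norm_mul, RCLike.norm_conj, norm_div_norm_self hc,
    norm_ofReal, norm_ofReal, abs_norm, abs_of_nonneg ht, mul_one,
    div_mul_cancel₀ _ (norm_ne_zero_iff.2 hy)]

theorem norm_inner_add_phaseAlignedStep (hy : y ≠ 0) (hc : ⟪x, y⟫_𝕜 ≠ 0) (ht : 0 ≤ t) :
    ‖⟪x + phaseAlignedStep 𝕜 x y t, y⟫_𝕜‖ = ‖⟪x, y⟫_𝕜‖ + t * ‖y‖ := by
  have hu := norm_div_norm_self hc
  have hcu : ⟪x, y⟫_𝕜 = ‖⟪x, y⟫_𝕜‖ * (⟪x, y⟫_𝕜 / ‖⟪x, y⟫_𝕜‖) := by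
    rw [mul_div_cancel₀ _ (by simpa using hc)]
  rw [inner_add_left, inner_phaseAlignedStep_left hy]
  nth_rw 1 [hcu]
  rw [← add_mul, ← ofReal_add, norm_mul, hu, mul_one, norm_ofReal, abs_of_nonneg (by positivity)]

theorem norm_add_phaseAlignedStep_sq (hy : y ≠ 0) (hc : ⟪x, y⟫_𝕜 ≠ 0) (ht : 0 ≤ t) :
    ‖x + phaseAlignedStep 𝕜 x y t‖ ^ 2 = ‖x‖ ^ 2 + (2 * t * ‖⟪x, y⟫_𝕜‖ / ‖y‖ + t ^ 2) := by
  rw [norm_add_sq (𝕜 := 𝕜), inner_phaseAlignedStep_right, ofReal_re, norm_phaseAlignedStep hy hc ht]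
  ring

theorem norm_inner_sq_div_lt_add_phaseAlignedStep {σ : ℝ} (hσ : 0 < σ) (ht : 0 < t) (hy : y ≠ 0)
    (hc : ⟪x, y⟫_𝕜 ≠ 0) :
    ‖⟪x, y⟫_𝕜‖ ^ 2 / (σ ^ 2 + ‖x‖ ^ 2)
      < ‖⟪x + phaseAlignedStep 𝕜 x y t, y⟫_𝕜‖ ^ 2 / (σ ^ 2 + ‖x + phaseAlignedStep 𝕜 x y t‖ ^ 2) := by
  have hy₀ : 0 < ‖y‖ := norm_pos_iff.2 hy
  have hCS : ‖⟪x, y⟫_𝕜‖ ^ 2 < (σ ^ 2 + ‖x‖ ^ 2) * ‖y‖ ^ 2 :=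
    calc ‖⟪x, y⟫_𝕜‖ ^ 2 ≤ (‖x‖ * ‖y‖) ^ 2 := by gcongr; exact norm_inner_le_norm x y
      _ < (σ ^ 2 + ‖x‖ ^ 2) * ‖y‖ ^ 2 := by nlinarith [pow_pos hσ 2, pow_pos hy₀ 2]
  rw [norm_inner_add_phaseAlignedStep hy hc ht.le, norm_add_phaseAlignedStep_sq hy hc ht.le,
    ← add_assoc]
  exact sq_div_lt_sq_add_mul_div (norm_nonneg _) hy₀ ht hCS

end PhaseAligned

theorem star_dotProduct_eq_inner {𝕜 ι : Type*} [RCLike 𝕜] [Fintype ι] (x y : ι → 𝕜) :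
    star x ⬝ᵥ y = ⟪WithLp.toLp 2 x, WithLp.toLp 2 y⟫_𝕜 := by
  rw [EuclideanSpace.inner_toLp_toLp, dotProduct_comm]

theorem re_star_dotProduct_self {ι : Type*} [Fintype ι] (x : ι → ℂ) :
    (star x ⬝ᵥ x).re = ‖WithLp.toLp 2 x‖ ^ 2 := by
  rw [star_dotProduct_eq_inner, inner_self_eq_norm_sq_to_K]
  norm_cast

theorem stmt5_general (m : ℕ) (σ t : ℝ) (hσ : 0 < σ) (ht : 0 < t)
    (v₁ v₂ : Fin m → ℂ) (hv₂ : v₂ ≠ 0)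
    (c : ℂ) (hc : c = star v₁ ⬝ᵥ v₂) (hc0 : c ≠ 0)
    (vδ : Fin m → ℂ)
    (hvδ : vδ = ((t : ℂ) * (starRingEnd ℂ) (c / (‖c‖ : ℂ))
        / ((Real.sqrt (star v₂ ⬝ᵥ v₂).re : ℂ))) • v₂) :
    ‖star (v₁ + vδ) ⬝ᵥ v₂‖ ^ 2
        / (σ ^ 2 + (star (v₁ + vδ) ⬝ᵥ (v₁ + vδ)).re)
      > ‖star v₁ ⬝ᵥ v₂‖ ^ 2 / (σ ^ 2 + (star v₁ ⬝ᵥ v₁).re) := by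
  have hδ : WithLp.toLp 2 vδ = phaseAlignedStep ℂ (WithLp.toLp 2 v₁) (WithLp.toLp 2 v₂) t := by
    rw [hvδ, hc, re_star_dotProduct_self, Real.sqrt_sq (norm_nonneg _), star_dotProduct_eq_inner,
      phaseAlignedStep, WithLp.toLp_smul]
    rfl
  rw [hc, star_dotProduct_eq_inner] at hc0
  rw [re_star_dotProduct_self, re_star_dotProduct_self, star_dotProduct_eq_inner,
    star_dotProduct_eq_inner, WithLp.toLp_add, hδ]
  exact norm_inner_sq_div_lt_add_phaseAlignedStep hσ ht (by simpa using hv₂) hc0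

/-- L_side(0) > R_side in Appendix B, Case 2: perturbing `v₁`
along the phase-aligned direction `e^{−jφ₁}·v₂/‖v₂‖` (where `e^{jφ₁} = c/|c|`,
`c = v₁ᴴv₂ ≠ 0`) strictly increases `|v₁ᴴv₂|²/(σ² + ‖v₁‖²)`. -/
theorem stmt5 (m : ℕ) (hm : 0 < m) (σ t : ℝ) (hσ : 0 < σ) (ht : 0 < t)
    (v₁ v₂ : Fin m → ℂ) (hv₂ : v₂ ≠ 0)
    (c : ℂ) (hc : c = star v₁ ⬝ᵥ v₂) (hc0 : c ≠ 0)
    (vδ : Fin m → ℂ)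
    (hvδ : vδ = ((t : ℂ) * (starRingEnd ℂ) (c / (‖c‖ : ℂ))
        / ((Real.sqrt (star v₂ ⬝ᵥ v₂).re : ℂ))) • v₂) :
    ‖star (v₁ + vδ) ⬝ᵥ v₂‖ ^ 2
        / (σ ^ 2 + (star (v₁ + vδ) ⬝ᵥ (v₁ + vδ)).re)
      > ‖star v₁ ⬝ᵥ v₂‖ ^ 2 / (σ ^ 2 + (star v₁ ⬝ᵥ v₁).re) :=
  stmt5_general m σ t hσ ht v₁ v₂ hv₂ c hc hc0 vδ hvδ
end

section
/- Let n be a positive integer, C₁ ∈ ℂ^{n×n} Hermitian positive semidefinite, C₂ ∈ ℂ^{n×n} Hermitian positive definite, A ∈ ℂ^{n×n} Hermitian, and S ∈ ℝ. Define F₄ = {W Hermitian positive semidefinite : Tr(W) = 1, Re Tr(A W) = S} and F₅ = {Q Hermitian positive semidefinite : Re Tr(C₂ Q) = 1, Re Tr(A Q) = S · Re Tr(Q)}. If F₄ is nonempty, then F₅ is nonempty and inf_{W ∈ F₄} Re Tr(C₁ W)/Re Tr(C₂ W) = inf_{Q ∈ F₅} Re Tr(C₁ Q). -/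
/-!
The Charnes–Cooper rescalings `W ↦ W / Re Tr(C₂ W)` and `Q ↦ Q / Re Tr Q` are mutually inverse
maps between `F₄` and `F₅`, and they carry the ratio objective `Re Tr(C₁ W) / Re Tr(C₂ W)` to the
linear objective `Re Tr(C₁ Q)`. Hence both problems have the same set of objective values. The
rescalings are well defined because `Re Tr(M W) > 0` for `M` positive definite and `W ≠ 0` positive
semidefinite: writing `W = Bᴴ B` gives `Tr(M W) = Tr(B M Bᴴ)`, the trace of a nonzero positive
semidefinite matrix.
-/

open Matrix
open scoped ComplexOrder

namespace Matrix

variable {ι 𝕜 : Type*} [Fintype ι] [RCLike 𝕜]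

open scoped MatrixOrder in
theorem PosSemidef.exists_eq_conjTranspose_mul_self [DecidableEq ι] {W : Matrix ι ι 𝕜}
    (hW : W.PosSemidef) : ∃ B : Matrix ι ι 𝕜, W = Bᴴ * B :=
  ⟨CFC.sqrt W, by
    rw [(CFC.sqrt_nonneg W).posSemidef.isHermitian.eq, CFC.sqrt_mul_sqrt_self W hW.nonneg]⟩

theorem PosDef.eq_zero_of_mul_mul_conjTranspose_eq_zero {M : Matrix ι ι 𝕜} (hM : M.PosDef)
    {B : Matrix ι ι 𝕜} (hB : B * M * Bᴴ = 0) : B = 0 := by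
  classical
  rw [← conjTranspose_eq_zero]
  refine ext_of_mulVec_single fun i => ?_
  by_contra hne
  rw [zero_mulVec] at hne
  have := hM.dotProduct_mulVec_pos hne
  rw [dotProduct_mulVec, star_mulVec, conjTranspose_conjTranspose, vecMul_vecMul,
    ← dotProduct_mulVec, mulVec_mulVec, hB] at this
  simp at this

theorem PosSemidef.re_trace_pos {Q : Matrix ι ι 𝕜} (hQ : Q.PosSemidef) (hQ0 : Q ≠ 0) :
    0 < RCLike.re Q.trace :=
  (RCLike.pos_iff.mp (hQ.trace_nonneg.lt_of_ne' (hQ.trace_eq_zero_iff.not.mpr hQ0))).1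

theorem PosDef.re_trace_mul_pos [DecidableEq ι] {M W : Matrix ι ι 𝕜} (hM : M.PosDef)
    (hW : W.PosSemidef) (hW0 : W ≠ 0) : 0 < RCLike.re (M * W).trace := by
  obtain ⟨B, rfl⟩ := hW.exists_eq_conjTranspose_mul_self
  have hP := hM.posSemidef.mul_mul_conjTranspose_same B
  have hP0 : B * M * Bᴴ ≠ 0 := fun h =>
    hW0 (by simp [hM.eq_zero_of_mul_mul_conjTranspose_eq_zero h])
  rw [← Matrix.mul_assoc, trace_mul_comm, ← Matrix.mul_assoc]
  exact hP.re_trace_pos hP0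

theorem re_trace_mul_smul (M Q : Matrix ι ι 𝕜) (r : ℝ) :
    RCLike.re (M * (r • Q)).trace = r * RCLike.re (M * Q).trace := by
  rw [mul_smul_comm, trace_smul, RCLike.smul_re]

theorem PosSemidef.trace_eq_ofReal_re {Q : Matrix ι ι 𝕜} (hQ : Q.PosSemidef) :
    Q.trace = (RCLike.re Q.trace : 𝕜) := by
  obtain ⟨x, -, hx⟩ := RCLike.nonneg_iff_exists_ofReal.mp hQ.trace_nonneg
  rw [← hx, RCLike.ofReal_re]

end Matrix

section CharnesCooper

variable {ι 𝕜 : Type*} [Fintype ι] [RCLike 𝕜]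

/-- The feasible set `F₄` of the fractional relaxation (P4). -/
def fractionalFeasibleSet (A : Matrix ι ι 𝕜) (S : ℝ) : Set (Matrix ι ι 𝕜) :=
  {W | W.PosSemidef ∧ W.trace = 1 ∧ RCLike.re (A * W).trace = S}

/-- The feasible set `F₅` of its Charnes–Cooper transform (P5). -/
def charnesCooperFeasibleSet (C₂ A : Matrix ι ι 𝕜) (S : ℝ) : Set (Matrix ι ι 𝕜) :=
  {Q | Q.PosSemidef ∧ RCLike.re (C₂ * Q).trace = 1 ∧
    RCLike.re (A * Q).trace = S * RCLike.re Q.trace}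

variable {C₂ A : Matrix ι ι 𝕜} {S : ℝ}

theorem smul_mem_charnesCooperFeasibleSet [DecidableEq ι] (hC₂ : C₂.PosDef) {W : Matrix ι ι 𝕜}
    (hW : W ∈ fractionalFeasibleSet A S) :
    (RCLike.re (C₂ * W).trace)⁻¹ • W ∈ charnesCooperFeasibleSet C₂ A S := by
  obtain ⟨hW, htr, hAW⟩ := hW
  have ht := hC₂.re_trace_mul_pos hW (by rintro rfl; simp at htr)
  refine ⟨hW.smul (inv_nonneg.mpr ht.le), ?_, ?_⟩
  · rw [re_trace_mul_smul, inv_mul_cancel₀ ht.ne']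
  · rw [re_trace_mul_smul, trace_smul, RCLike.smul_re, hAW, htr, RCLike.one_re]
    ring

theorem re_trace_pos_of_mem_charnesCooperFeasibleSet {Q : Matrix ι ι 𝕜}
    (hQ : Q ∈ charnesCooperFeasibleSet C₂ A S) : 0 < RCLike.re Q.trace :=
  hQ.1.re_trace_pos (by rintro rfl; simp [charnesCooperFeasibleSet] at hQ)

theorem smul_mem_fractionalFeasibleSet {Q : Matrix ι ι 𝕜}
    (hQ : Q ∈ charnesCooperFeasibleSet C₂ A S) :
    (RCLike.re Q.trace)⁻¹ • Q ∈ fractionalFeasibleSet A S := by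
  have hs := re_trace_pos_of_mem_charnesCooperFeasibleSet hQ
  obtain ⟨hQ, -, hAQ⟩ := hQ
  refine ⟨hQ.smul (inv_nonneg.mpr hs.le), ?_, ?_⟩
  · rw [trace_smul, hQ.trace_eq_ofReal_re, RCLike.real_smul_eq_coe_mul, ← RCLike.ofReal_mul,
      RCLike.ofReal_re, inv_mul_cancel₀ hs.ne', RCLike.ofReal_one]
  · rw [re_trace_mul_smul, hAQ]
    field_simp

theorem image_ratio_fractionalFeasibleSet [DecidableEq ι] (C₁ : Matrix ι ι 𝕜) (hC₂ : C₂.PosDef) :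
    (fun W => RCLike.re (C₁ * W).trace / RCLike.re (C₂ * W).trace) '' fractionalFeasibleSet A S =
      (fun Q => RCLike.re (C₁ * Q).trace) '' charnesCooperFeasibleSet C₂ A S := by
  apply Set.Subset.antisymm
  · rintro _ ⟨W, hW, rfl⟩
    refine ⟨_, smul_mem_charnesCooperFeasibleSet hC₂ hW, ?_⟩
    dsimp only
    rw [re_trace_mul_smul, inv_mul_eq_div]
  · rintro _ ⟨Q, hQ, rfl⟩
    refine ⟨_, smul_mem_fractionalFeasibleSet hQ, ?_⟩
    dsimp only
    rw [re_trace_mul_smul, re_trace_mul_smul, hQ.2.1, mul_one, mul_div_cancel_left₀]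
    exact inv_ne_zero (re_trace_pos_of_mem_charnesCooperFeasibleSet hQ).ne'

end CharnesCooper

theorem stmt16_general (n : ℕ)
    (C₁ C₂ A : Matrix (Fin n) (Fin n) ℂ)
    (h2 : C₂.PosDef) (S : ℝ)
    (F₄ F₅ : Set (Matrix (Fin n) (Fin n) ℂ))
    (hF₄ : F₄ = {W | W.PosSemidef ∧ W.trace = 1 ∧ ((A * W).trace).re = S})
    (hF₅ : F₅ = {Q | Q.PosSemidef ∧ ((C₂ * Q).trace).re = 1
        ∧ ((A * Q).trace).re = S * (Q.trace).re})
    (hne : F₄.Nonempty) :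
    F₅.Nonempty ∧
    sInf ((fun W => ((C₁ * W).trace).re / ((C₂ * W).trace).re) '' F₄)
      = sInf ((fun Q => ((C₁ * Q).trace).re) '' F₅) := by
  have himg : (fun W => ((C₁ * W).trace).re / ((C₂ * W).trace).re) '' F₄
      = (fun Q => ((C₁ * Q).trace).re) '' F₅ := by
    subst hF₄ hF₅
    exact image_ratio_fractionalFeasibleSet C₁ h2
  exact ⟨(himg ▸ hne.image _).of_image, congrArg sInf himg⟩

/-- value equality in Lemma 4: the fractional SDR problem (P4)
with feasible set `F₄` and the Charnes–Cooper transformed problem (P5) with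
feasible set `F₅` have the same optimal value, and `F₅` is nonempty when `F₄` is. -/
theorem stmt16 (n : ℕ) (hn : 0 < n)
    (C₁ C₂ A : Matrix (Fin n) (Fin n) ℂ)
    (h1 : C₁.PosSemidef) (h2 : C₂.PosDef) (hA : A.IsHermitian) (S : ℝ)
    (F₄ F₅ : Set (Matrix (Fin n) (Fin n) ℂ))
    (hF₄ : F₄ = {W | W.PosSemidef ∧ W.trace = 1 ∧ ((A * W).trace).re = S})
    (hF₅ : F₅ = {Q | Q.PosSemidef ∧ ((C₂ * Q).trace).re = 1
        ∧ ((A * Q).trace).re = S * (Q.trace).re})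
    (hne : F₄.Nonempty) :
    F₅.Nonempty ∧
    sInf ((fun W => ((C₁ * W).trace).re / ((C₂ * W).trace).re) '' F₄)
      = sInf ((fun Q => ((C₁ * Q).trace).re) '' F₅) :=
  stmt16_general n C₁ C₂ A h2 S F₄ F₅ hF₄ hF₅ hne
end

section
/- Let n be a positive integer, C₁ ∈ ℂ^{n×n} Hermitian positive semidefinite, C₂ ∈ ℂ^{n×n} Hermitian positive definite, A ∈ ℂ^{n×n} Hermitian, and S ∈ ℝ. Define F₄ = {W Hermitian positive semidefinite : Tr(W) = 1, Re Tr(A W) = S} and F₅ = {Q Hermitian positive semidefinite : Re Tr(C₂ Q) = 1, Re Tr(A Q) = S · Re Tr(Q)}. (i) If W* ∈ F₄ minimizes Re Tr(C₁ W)/Re Tr(C₂ W) over F₄, then Q* = W*/Re Tr(C₂ W*) belongs to F₅ and minimizes Re Tr(C₁ Q) over F₅. (ii) If Q* ∈ F₅ minimizes Re Tr(C₁ Q) over F₅, then Re Tr(Q*) > 0, W* = Q*/Re Tr(Q*) belongs to F₄, and W* minimizes Re Tr(C₁ W)/Re Tr(C₂ W) over F₄. -/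
/-!
The Charnes–Cooper substitution `y = x / g x`, `x = y / t y` is a bijection between the two
feasible sets under which the objective `f x / g x` of the fractional problem becomes the
objective `f y` of the transformed one. It only needs the constraint set to be a cone on which
the denominators `g = Re Tr(C₂ ·)` and `t = Re Tr` are positive away from `0`. For matrices this
positivity holds because a positive semidefinite `W` is a sum `∑ vᵢ vᵢᴴ`, so that
`Tr(C W) = ∑ vᵢᴴ C vᵢ`.
-/

open Matrix
open scoped ComplexOrder

namespace CharnesCooper

variable {E : Type*} [AddCommGroup E] [Module ℝ E]

/-- The constraints of the fractional program (P4), which minimizes `f x / g x`. -/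
def fracFeasible (K : Set E) (t a : E →ₗ[ℝ] ℝ) (S : ℝ) : Set E :=
  {x | x ∈ K ∧ t x = 1 ∧ a x = S}

/-- The constraints of its Charnes–Cooper transform (P5), which minimizes `f y`. -/
def transformedFeasible (K : Set E) (g t a : E →ₗ[ℝ] ℝ) (S : ℝ) : Set E :=
  {y | y ∈ K ∧ g y = 1 ∧ a y = S * t y}

variable {K : Set E} {f g t a : E →ₗ[ℝ] ℝ} {S : ℝ}

lemma map_pos_of_mem_fracFeasible (hg : ∀ x ∈ K, x ≠ 0 → 0 < g x) {x : E}
    (hx : x ∈ fracFeasible K t a S) : 0 < g x :=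
  hg x hx.1 fun h => by simpa [h] using hx.2.1

lemma map_pos_of_mem_transformedFeasible (ht : ∀ x ∈ K, x ≠ 0 → 0 < t x) {y : E}
    (hy : y ∈ transformedFeasible K g t a S) : 0 < t y :=
  ht y hy.1 fun h => by simpa [h] using hy.2.1

lemma inv_smul_mem_transformedFeasible (hK : ∀ x ∈ K, ∀ c : ℝ, 0 < c → c • x ∈ K)
    (hg : ∀ x ∈ K, x ≠ 0 → 0 < g x) {x : E} (hx : x ∈ fracFeasible K t a S) :
    (g x)⁻¹ • x ∈ transformedFeasible K g t a S := by
  have hgx := map_pos_of_mem_fracFeasible hg hx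
  obtain ⟨hxK, htx, hax⟩ := hx
  refine ⟨hK x hxK _ (inv_pos.mpr hgx), ?_, ?_⟩
  · simp [hgx.ne']
  · simp [htx, hax, mul_comm]

lemma inv_smul_mem_fracFeasible (hK : ∀ x ∈ K, ∀ c : ℝ, 0 < c → c • x ∈ K)
    (ht : ∀ x ∈ K, x ≠ 0 → 0 < t x) {y : E} (hy : y ∈ transformedFeasible K g t a S) :
    (t y)⁻¹ • y ∈ fracFeasible K t a S := by
  have hty := map_pos_of_mem_transformedFeasible ht hy
  obtain ⟨hyK, hgy, hay⟩ := hy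
  refine ⟨hK y hyK _ (inv_pos.mpr hty), ?_, ?_⟩
  · simp [hty.ne']
  · simp only [map_smul, smul_eq_mul, hay]
    field_simp

lemma map_inv_smul_self (f g : E →ₗ[ℝ] ℝ) (x : E) : f ((g x)⁻¹ • x) = f x / g x := by
  rw [map_smul, smul_eq_mul, inv_mul_eq_div]

lemma div_map_inv_smul_of_map_eq_one {y : E} (hgy : g y = 1) (hty : t y ≠ 0) :
    f ((t y)⁻¹ • y) / g ((t y)⁻¹ • y) = f y := by
  simp only [map_smul, smul_eq_mul, hgy]
  field_simp

theorem isMinOn_inv_smul_of_isMinOn_div (hK : ∀ x ∈ K, ∀ c : ℝ, 0 < c → c • x ∈ K)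
    (ht : ∀ x ∈ K, x ≠ 0 → 0 < t x) {x : E}
    (hmin : IsMinOn (fun x => f x / g x) (fracFeasible K t a S) x) :
    IsMinOn f (transformedFeasible K g t a S) ((g x)⁻¹ • x) := by
  intro y hy
  have hty := map_pos_of_mem_transformedFeasible ht hy
  calc f ((g x)⁻¹ • x) = f x / g x := map_inv_smul_self f g x
    _ ≤ f ((t y)⁻¹ • y) / g ((t y)⁻¹ • y) := hmin (inv_smul_mem_fracFeasible hK ht hy)
    _ = f y := div_map_inv_smul_of_map_eq_one hy.2.1 hty.ne'

theorem isMinOn_div_inv_smul_of_isMinOn (hK : ∀ x ∈ K, ∀ c : ℝ, 0 < c → c • x ∈ K)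
    (hg : ∀ x ∈ K, x ≠ 0 → 0 < g x) (ht : ∀ x ∈ K, x ≠ 0 → 0 < t x) {y : E}
    (hy : y ∈ transformedFeasible K g t a S)
    (hmin : IsMinOn f (transformedFeasible K g t a S) y) :
    IsMinOn (fun x => f x / g x) (fracFeasible K t a S) ((t y)⁻¹ • y) := by
  intro x hx
  have hty := map_pos_of_mem_transformedFeasible ht hy
  calc f ((t y)⁻¹ • y) / g ((t y)⁻¹ • y)
      = f y := div_map_inv_smul_of_map_eq_one hy.2.1 hty.ne'
    _ ≤ f ((g x)⁻¹ • x) := hmin (inv_smul_mem_transformedFeasible hK hg hx)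
    _ = f x / g x := map_inv_smul_self f g x

end CharnesCooper

namespace Matrix

section RCLike

variable {𝕜 ι : Type*} [RCLike 𝕜] [Fintype ι]

lemma trace_mul_vecMulVec_star (C : Matrix ι ι 𝕜) (v : ι → 𝕜) :
    (C * vecMulVec v (star v)).trace = star v ⬝ᵥ C *ᵥ v := by
  rw [mul_vecMulVec, trace_vecMulVec, dotProduct_comm]

lemma PosDef.trace_mul_pos {C W : Matrix ι ι 𝕜} (hC : C.PosDef) (hW : W.PosSemidef)
    (hW0 : W ≠ 0) : 0 < (C * W).trace := by
  obtain ⟨m, v, rfl⟩ := posSemidef_iff_eq_sum_vecMulVec.mp hW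
  obtain ⟨i, hi⟩ : ∃ i, v i ≠ 0 := by
    by_contra! h
    simp [h] at hW0
  simp only [Matrix.mul_sum, trace_sum, trace_mul_vecMulVec_star]
  exact Finset.sum_pos' (fun j _ => hC.posSemidef.dotProduct_mulVec_nonneg (v j))
    ⟨i, Finset.mem_univ i, hC.dotProduct_mulVec_pos hi⟩

lemma PosSemidef.trace_eq_one_iff {W : Matrix ι ι 𝕜} (hW : W.PosSemidef) :
    W.trace = 1 ↔ RCLike.re W.trace = 1 := by
  have him := (RCLike.nonneg_iff.mp hW.trace_nonneg).2
  simp [RCLike.ext_iff (K := 𝕜), him]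

end RCLike

variable {ι : Type*} [Fintype ι]

noncomputable def reTrace : Matrix ι ι ℂ →ₗ[ℝ] ℝ :=
  Complex.reLm ∘ₗ (traceLinearMap ι ℂ ℂ).restrictScalars ℝ

noncomputable def reTraceMul (C : Matrix ι ι ℂ) : Matrix ι ι ℂ →ₗ[ℝ] ℝ :=
  reTrace ∘ₗ (LinearMap.mulLeft ℂ C).restrictScalars ℝ

variable {C W : Matrix ι ι ℂ}

lemma PosDef.reTraceMul_pos (hC : C.PosDef) (hW : W.PosSemidef) (hW0 : W ≠ 0) :
    0 < reTraceMul C W :=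
  (Complex.pos_iff.mp (hC.trace_mul_pos hW hW0)).1

lemma PosSemidef.reTrace_pos (hW : W.PosSemidef) (hW0 : W ≠ 0) : 0 < reTrace W := by
  classical
  simpa [reTraceMul] using PosDef.one.reTraceMul_pos hW hW0

end Matrix

open CharnesCooper

theorem stmt17_general (n : ℕ)
    (C₁ C₂ A : Matrix (Fin n) (Fin n) ℂ)
    (h2 : C₂.PosDef) (S : ℝ)
    (F₄ F₅ : Set (Matrix (Fin n) (Fin n) ℂ))
    (hF₄ : F₄ = {W | W.PosSemidef ∧ W.trace = 1 ∧ ((A * W).trace).re = S})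
    (hF₅ : F₅ = {Q | Q.PosSemidef ∧ ((C₂ * Q).trace).re = 1
        ∧ ((A * Q).trace).re = S * (Q.trace).re}) :
    (∀ Wstar ∈ F₄,
      (∀ W ∈ F₄, ((C₁ * Wstar).trace).re / ((C₂ * Wstar).trace).re
          ≤ ((C₁ * W).trace).re / ((C₂ * W).trace).re) →
      ((((C₂ * Wstar).trace).re)⁻¹ • Wstar ∈ F₅ ∧
        ∀ Q ∈ F₅, ((C₁ * ((((C₂ * Wstar).trace).re)⁻¹ • Wstar)).trace).re
          ≤ ((C₁ * Q).trace).re)) ∧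
    (∀ Qstar ∈ F₅,
      (∀ Q ∈ F₅, ((C₁ * Qstar).trace).re ≤ ((C₁ * Q).trace).re) →
      (0 < (Qstar.trace).re ∧
        ((Qstar.trace).re)⁻¹ • Qstar ∈ F₄ ∧
        ∀ W ∈ F₄,
          ((C₁ * (((Qstar.trace).re)⁻¹ • Qstar)).trace).re
              / ((C₂ * (((Qstar.trace).re)⁻¹ • Qstar)).trace).re
            ≤ ((C₁ * W).trace).re / ((C₂ * W).trace).re)) := by
  set K := {W : Matrix (Fin n) (Fin n) ℂ | W.PosSemidef}
  have hK : ∀ W ∈ K, ∀ c : ℝ, 0 < c → c • W ∈ K := fun W hW c hc => hW.smul hc.le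
  have hg : ∀ W ∈ K, W ≠ 0 → 0 < reTraceMul C₂ W := fun W hW => h2.reTraceMul_pos hW
  have ht : ∀ W ∈ K, W ≠ 0 → 0 < reTrace W := fun W hW => PosSemidef.reTrace_pos hW
  obtain rfl : F₄ = fracFeasible K reTrace (reTraceMul A) S := by
    rw [hF₄]
    ext W
    exact and_congr_right fun hW => and_congr_left' hW.trace_eq_one_iff
  obtain rfl : F₅ = transformedFeasible K (reTraceMul C₂) reTrace (reTraceMul A) S := hF₅
  refine ⟨fun W hW hmin => ⟨inv_smul_mem_transformedFeasible hK hg hW,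
      isMinOn_inv_smul_of_isMinOn_div (f := reTraceMul C₁) hK ht hmin⟩,
    fun Q hQ hmin => ⟨map_pos_of_mem_transformedFeasible ht hQ,
      inv_smul_mem_fracFeasible hK ht hQ,
      isMinOn_div_inv_smul_of_isMinOn (f := reTraceMul C₁) hK hg ht hQ hmin⟩⟩

/-- solution correspondence in Lemma 4: minimizers of the
fractional SDR problem (P4) and of its Charnes–Cooper transformation (P5) are
mapped to each other by `Q = W/Re Tr(C₂·W)` and `W = Q/Re Tr(Q)`. -/
theorem stmt17 (n : ℕ) (hn : 0 < n)
    (C₁ C₂ A : Matrix (Fin n) (Fin n) ℂ)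
    (h1 : C₁.PosSemidef) (h2 : C₂.PosDef) (hA : A.IsHermitian) (S : ℝ)
    (F₄ F₅ : Set (Matrix (Fin n) (Fin n) ℂ))
    (hF₄ : F₄ = {W | W.PosSemidef ∧ W.trace = 1 ∧ ((A * W).trace).re = S})
    (hF₅ : F₅ = {Q | Q.PosSemidef ∧ ((C₂ * Q).trace).re = 1
        ∧ ((A * Q).trace).re = S * (Q.trace).re}) :
    (∀ Wstar ∈ F₄,
      (∀ W ∈ F₄, ((C₁ * Wstar).trace).re / ((C₂ * Wstar).trace).re
          ≤ ((C₁ * W).trace).re / ((C₂ * W).trace).re) →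
      ((((C₂ * Wstar).trace).re)⁻¹ • Wstar ∈ F₅ ∧
        ∀ Q ∈ F₅, ((C₁ * ((((C₂ * Wstar).trace).re)⁻¹ • Wstar)).trace).re
          ≤ ((C₁ * Q).trace).re)) ∧
    (∀ Qstar ∈ F₅,
      (∀ Q ∈ F₅, ((C₁ * Qstar).trace).re ≤ ((C₁ * Q).trace).re) →
      (0 < (Qstar.trace).re ∧
        ((Qstar.trace).re)⁻¹ • Qstar ∈ F₄ ∧
        ∀ W ∈ F₄,
          ((C₁ * (((Qstar.trace).re)⁻¹ • Qstar)).trace).re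
              / ((C₂ * (((Qstar.trace).re)⁻¹ • Qstar)).trace).re
            ≤ ((C₁ * W).trace).re / ((C₂ * W).trace).re)) :=
  stmt17_general n C₁ C₂ A h2 S F₄ F₅ hF₄ hF₅
end
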